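/- Suppose functions rᵢⱼ (i ≠ j, symmetric in i,j) satisfy: E_k rᵢⱼ = rᵢₖ rⱼₖ for distinct i,j,k; Σₖ E_k rᵢⱼ = 0 (S̄ rᵢⱼ = 0); and Σₖ uₖ E_k rᵢⱼ = -rᵢⱼ (X̄ rᵢⱼ = -rᵢⱼ), where E_k are derivations and u_k functions with E_k uᵢ = δᵢₖ. Then for i ≠ j with uᵢ ≠ uⱼ: Eᵢ rᵢⱼ = (uⱼ - uᵢ)⁻¹ ( rᵢⱼ + Σ_{k ≠ i,j} (u_k - uⱼ) rᵢₖ rⱼₖ ). -/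

import Mathlib

/-!
The Darboux–Egoroff equation evaluates every term `k ≠ i, j` of the string and Euler constraints,
leaving a linear system in `Eᵢ rᵢⱼ` and `Eⱼ rᵢⱼ` with determinant `uⱼ - uᵢ`; eliminating
`Eⱼ rᵢⱼ` gives the formula.
-/

open Finset

theorem Finset.sum_univ_eq_sum_sdiff_pair_add {ι M : Type*} [Fintype ι] [DecidableEq ι]
    [AddCommMonoid M] {i j : ι} (hij : i ≠ j) (f : ι → M) :
    ∑ k, f k = ∑ k ∈ univ \ {i, j}, f k + (f i + f j) := by
  rw [← sum_sdiff (subset_univ {i, j}), sum_pair hij]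

theorem sum_mul_apply_eq_of_darbouxEgoroff {ι R : Type*} [Fintype ι] [DecidableEq ι] [CommRing R]
    (E : ι → R → R) (r : ι → ι → R)
    (hDE : ∀ i j k : ι, i ≠ j → j ≠ k → i ≠ k → E k (r i j) = r i k * r j k)
    (w : ι → R) {i j : ι} (hij : i ≠ j) :
    ∑ k, w k * E k (r i j) =
      ∑ k ∈ univ \ {i, j}, w k * (r i k * r j k) + (w i * E i (r i j) + w j * E j (r i j)) := by
  rw [sum_univ_eq_sum_sdiff_pair_add hij]
  congr 1
  refine sum_congr rfl fun k hk => ?_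
  simp only [mem_sdiff, mem_univ, mem_insert, mem_singleton, true_and, not_or] at hk
  rw [hDE i j k hij (Ne.symm hk.2) (Ne.symm hk.1)]

theorem stmt_19_general {R : Type*} [CommRing R]
    (N : ℕ) (E : Fin N → R → R) (u : Fin N → R) (r : Fin N → Fin N → R)
    (hDE : ∀ i j k : Fin N, i ≠ j → j ≠ k → i ≠ k →
      E k (r i j) = r i k * r j k)
    (hstring : ∀ i j : Fin N, i ≠ j → ∑ k : Fin N, E k (r i j) = 0)
    (heuler : ∀ i j : Fin N, i ≠ j →
      ∑ k : Fin N, u k * E k (r i j) = -(r i j)) :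
    ∀ i j : Fin N, i ≠ j → IsUnit (u j - u i) →
      E i (r i j) = Ring.inverse (u j - u i) *
        (r i j + ∑ k ∈ (Finset.univ \ {i, j} : Finset (Fin N)),
          (u k - u j) * r i k * r j k) := by
  intro i j hij hunit
  have hS := sum_mul_apply_eq_of_darbouxEgoroff E r hDE 1 hij
  have hX := sum_mul_apply_eq_of_darbouxEgoroff E r hDE u hij
  simp only [Pi.one_apply, one_mul] at hS
  rw [hstring i j hij] at hS
  rw [heuler i j hij] at hX
  have key : (u j - u i) * E i (r i j) =
      r i j + ∑ k ∈ univ \ {i, j}, (u k - u j) * r i k * r j k := by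
    simp only [sub_mul, mul_assoc, sum_sub_distrib, ← mul_sum]
    linear_combination hX - u j * hS
  rw [← key, Ring.inverse_mul_cancel_left _ _ hunit]

/-- Lemma 2.5(b) (lem:derRotPrim(b)): if the rotation coefficients satisfy the
Darboux–Egoroff equation `E_k rᵢⱼ = rᵢₖ rⱼₖ` for distinct `i,j,k`, the string
constraint `Σₖ E_k rᵢⱼ = 0`, and the Euler constraint `Σₖ uₖ E_k rᵢⱼ = -rᵢⱼ`,
where the `E_k` are derivations with `E_k uᵢ = δᵢₖ`, then for `i ≠ j` with
`uⱼ - uᵢ` invertible: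
`Eᵢ rᵢⱼ = (uⱼ - uᵢ)⁻¹ ( rᵢⱼ + Σ_{k ≠ i,j} (u_k - uⱼ) rᵢₖ rⱼₖ )`. -/
theorem stmt_19 {R : Type*} [CommRing R]
    (N : ℕ) (E : Fin N → R → R) (u : Fin N → R) (r : Fin N → Fin N → R)
    (hadd : ∀ k : Fin N, ∀ x y : R, E k (x + y) = E k x + E k y)
    (hleib : ∀ k : Fin N, ∀ x y : R, E k (x * y) = x * E k y + y * E k x)
    (hrsymm : ∀ i j : Fin N, r i j = r j i)
    (hDE : ∀ i j k : Fin N, i ≠ j → j ≠ k → i ≠ k →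
      E k (r i j) = r i k * r j k)
    (hstring : ∀ i j : Fin N, i ≠ j → ∑ k : Fin N, E k (r i j) = 0)
    (heuler : ∀ i j : Fin N, i ≠ j →
      ∑ k : Fin N, u k * E k (r i j) = -(r i j))
    (hu : ∀ i k : Fin N, E k (u i) = if i = k then 1 else 0) :
    ∀ i j : Fin N, i ≠ j → IsUnit (u j - u i) →
      E i (r i j) = Ring.inverse (u j - u i) *
        (r i j + ∑ k ∈ (Finset.univ \ {i, j} : Finset (Fin N)),
          (u k - u j) * r i k * r j k) :=
  stmt_19_general N E u r hDE hstring heuler
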